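/- Let u ∈ C_c^∞(ℝⁿ, ℝ) and 1 < p < 3. Then the pairing ⟨|u|^{p−2} u, −Δu⟩ := ∫_{ℝⁿ} |u|^{p−2} u · (−Δu) dx satisfies ⟨|u|^{p−2} u, −Δu⟩ ≥ 0 on the set where u ≠ 0, in the sense that ∫ |u|^{p−2}|∇u|² dx + (p−2) ∫ |u|^{p−2} |∇|u||² dx ≥ 0 after integration by parts; in particular ⟨|u|^{p−2}u, Δu⟩ ≤ 0. -/

import Mathlib

open MeasureTheory

/-- The Euclidean Laplacian `Δf = ∑ i ∂²f/∂xᵢ²` of a real function on `ℝⁿ`. -/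
noncomputable def lapR {n : ℕ} (f : EuclideanSpace ℝ (Fin n) → ℝ)
    (x : EuclideanSpace ℝ (Fin n)) : ℝ :=
  ∑ i : Fin n,
    fderiv ℝ (fun y => fderiv ℝ f y (EuclideanSpace.single i (1 : ℝ))) x
      (EuclideanSpace.single i (1 : ℝ))

open Real Filter in
theorem aux_ibp {n : ℕ} (p : ℝ) (hp : 1 < p)
    (u : EuclideanSpace ℝ (Fin n) → ℝ) (hu : ContDiff ℝ (⊤ : ℕ∞) u)
    (hc : HasCompactSupport u) {ε : ℝ} (hε : 0 < ε) :
    (∫ x, (u x * ((u x)^2 + ε) ^ ((p-2)/2)) * lapR u x) ≤ 0 := by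
  set q : ℝ := (p-2)/2 with hq
  set φ : ℝ → ℝ := fun t => t * (t^2+ε)^q with hφdef
  set ψ : ℝ → ℝ := fun t => (t^2+ε)^(q-1) * ((p-1)*t^2 + ε) with hψdef
  have hpos : ∀ t : ℝ, (0:ℝ) < t^2+ε := fun t => by positivity
  have hderiv : ∀ t, HasDerivAt φ (ψ t) t := by
    intro t
    have h1 : HasDerivAt (fun t : ℝ => t^2+ε) (2*t) t := by
      simpa using ((hasDerivAt_id t).pow 2).add_const ε
    have h2 := (Real.hasDerivAt_rpow_const (p := q) (Or.inl (hpos t).ne')).comp t h1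
    have h3 := (hasDerivAt_id t).mul h2
    refine h3.congr_deriv ?_
    have e1 : (t^2+ε)^q = (t^2+ε)^(q-1) * (t^2+ε) := by
      rw [← Real.rpow_add_one (hpos t).ne']; ring_nf
    rw [Function.comp_def] at *
    simp only [id_eq, hψdef, hq]
    rw [e1]; ring
  have hψnn : ∀ t, 0 ≤ ψ t := by
    intro t
    apply mul_nonneg (Real.rpow_nonneg (hpos t).le _)
    nlinarith [sq_nonneg t]
  have hφc : ContDiff ℝ (⊤ : ℕ∞) φ :=
    contDiff_id.mul (((contDiff_id.pow 2).add contDiff_const).rpow_const_of_ne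
      (fun t => (hpos t).ne'))
  have hψc : Continuous ψ := by
    apply Continuous.mul
    · exact (((continuous_pow 2).add continuous_const).rpow_const
        (fun t => Or.inl (hpos t).ne'))
    · continuity
  have hud : Differentiable ℝ u := hu.differentiable (by simp)
  -- composite
  have hφuc : ContDiff ℝ (⊤ : ℕ∞) (fun x => φ (u x)) := hφc.comp hu
  have hφu0 : HasCompactSupport (fun x => φ (u x)) := by
    apply hc.comp_left (g := φ)
    simp [hφdef]
  have hfφu : ∀ x v, fderiv ℝ (fun y => φ (u y)) x v = ψ (u x) * fderiv ℝ u x v := by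
    intro x v
    have h := ((hderiv (u x)).comp_hasFDerivAt x (hud x).hasFDerivAt).fderiv
    rw [Function.comp_def] at h
    rw [h]; simp
  have hlap : ∀ x, lapR u x = ∑ i : Fin n,
      fderiv ℝ (fun y => fderiv ℝ u y (EuclideanSpace.single i (1:ℝ))) x
        (EuclideanSpace.single i (1:ℝ)) := fun x => rfl
  -- per direction facts
  have key : ∀ i : Fin n,
      (∫ x, φ (u x) *
        fderiv ℝ (fun y => fderiv ℝ u y (EuclideanSpace.single i (1:ℝ))) x
          (EuclideanSpace.single i (1:ℝ)))
      = - ∫ x, (ψ (u x) * fderiv ℝ u x (EuclideanSpace.single i (1:ℝ))) *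
          fderiv ℝ u x (EuclideanSpace.single i (1:ℝ)) := by
    intro i
    set e : EuclideanSpace ℝ (Fin n) := EuclideanSpace.single i (1:ℝ)
    set g : EuclideanSpace ℝ (Fin n) → ℝ := fun y => fderiv ℝ u y e with hgdef
    have hgc : ContDiff ℝ (⊤ : ℕ∞) g := (hu.fderiv_right (by simp)).clm_apply contDiff_const
    have hgsupp : HasCompactSupport g := by
      apply (hc.fderiv ℝ).comp_left (g := fun L : _ →L[ℝ] ℝ => L e)
      simp
    have hInt1 : Integrable (fun x => fderiv ℝ (fun y => φ (u y)) x e * g x) := by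
      apply Continuous.integrable_of_hasCompactSupport
      · have : Continuous (fun x => ψ (u x) * fderiv ℝ u x e) :=
          (hψc.comp hu.continuous).mul hgc.continuous
        simp only [hfφu]; exact this.mul hgc.continuous
      · exact (hgsupp.mul_left (f := fun x => fderiv ℝ (fun y => φ (u y)) x e))
    have hInt2 : Integrable (fun x => φ (u x) * fderiv ℝ g x e) := by
      apply Continuous.integrable_of_hasCompactSupport
      · exact hφuc.continuous.mul ((hgc.fderiv_right (m := (⊤ : ℕ∞)) (by simp)).clm_apply contDiff_const).continuous
      · exact hφu0.mul_right
    have hInt3 : Integrable (fun x => φ (u x) * g x) :=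
      (hφuc.continuous.mul hgc.continuous).integrable_of_hasCompactSupport hφu0.mul_right
    have := integral_mul_fderiv_eq_neg_fderiv_mul_of_integrable hInt1 hInt2 hInt3
      (fun x _ => hφuc.differentiable (by simp) x) (fun x _ => hgc.differentiable (by simp) x)
    rw [this]
    congr 1
    refine integral_congr_ae (Filter.Eventually.of_forall fun x => ?_)
    simp only [hfφu]
    rfl
  have hIntB : ∀ i : Fin n, Integrable (fun x => φ (u x) *
      fderiv ℝ (fun y => fderiv ℝ u y (EuclideanSpace.single i (1:ℝ))) x
        (EuclideanSpace.single i (1:ℝ))) := by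
    intro i
    set g : EuclideanSpace ℝ (Fin n) → ℝ :=
      fun y => fderiv ℝ u y (EuclideanSpace.single i (1:ℝ)) with hgdef
    have hgc : ContDiff ℝ (⊤ : ℕ∞) g := (hu.fderiv_right (by simp)).clm_apply contDiff_const
    exact (hφuc.continuous.mul
      ((hgc.fderiv_right (m := (⊤ : ℕ∞)) (by simp)).clm_apply contDiff_const).continuous).integrable_of_hasCompactSupport
      hφu0.mul_right
  calc (∫ x, (u x * ((u x)^2 + ε) ^ ((p-2)/2)) * lapR u x)
      = ∫ x, ∑ i : Fin n, φ (u x) *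
          fderiv ℝ (fun y => fderiv ℝ u y (EuclideanSpace.single i (1:ℝ))) x
            (EuclideanSpace.single i (1:ℝ)) := by
        refine integral_congr_ae (Filter.Eventually.of_forall fun x => ?_)
        show u x * (u x ^ 2 + ε) ^ ((p - 2) / 2) * lapR u x = _
        rw [show lapR u x = ∑ i : Fin n,
          fderiv ℝ (fun y => fderiv ℝ u y (EuclideanSpace.single i (1:ℝ))) x
            (EuclideanSpace.single i (1:ℝ)) from rfl, Finset.mul_sum]
    _ = ∑ i : Fin n, ∫ x, φ (u x) *
          fderiv ℝ (fun y => fderiv ℝ u y (EuclideanSpace.single i (1:ℝ))) x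
            (EuclideanSpace.single i (1:ℝ)) :=
        integral_finset_sum _ (fun i _ => hIntB i)
    _ ≤ 0 := by
        apply Finset.sum_nonpos
        intro i _
        rw [key i, neg_nonpos]
        apply integral_nonneg
        intro x
        have := mul_nonneg (hψnn (u x))
          (mul_self_nonneg (fderiv ℝ u x (EuclideanSpace.single i (1:ℝ))))
        simpa [mul_assoc] using this

/-- For `u ∈ C_c^∞(ℝⁿ,ℝ)` and `1 < p < 3`,
`∫ |u|^{p−2}|∇u|² + (p−2)∫ |u|^{p−2}|∇|u||² ≥ 0`, and in particular the pairing
`⟨|u|^{p−2}u, Δu⟩ = ∫ |u|^{p−2} u Δu ≤ 0` (dissipativity of `−Δ` on `L^p`). -/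
theorem stmt15 {n : ℕ} (p : ℝ) (hp : 1 < p) (hp3 : p < 3)
    (u : EuclideanSpace ℝ (Fin n) → ℝ) (hu : ContDiff ℝ (⊤ : ℕ∞) u)
    (hc : HasCompactSupport u) :
    0 ≤ (∫ x, |u x| ^ (p - 2) * ‖fderiv ℝ u x‖ ^ 2) +
        (p - 2) * ∫ x, |u x| ^ (p - 2) * ‖fderiv ℝ (fun y => |u y|) x‖ ^ 2 ∧
    (∫ x, |u x| ^ (p - 2) * u x * lapR u x) ≤ 0 := by
  constructor
  · -- first conjunct
    by_cases hp2 : p = 2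
    · subst hp2
      norm_num
      apply integral_nonneg
      intro x
      positivity
    · have heq : ∀ x, |u x| ^ (p-2) * ‖fderiv ℝ (fun y => |u y|) x‖ ^ 2
          = |u x| ^ (p-2) * ‖fderiv ℝ u x‖ ^ 2 := by
        intro x
        by_cases h0 : u x = 0
        · rw [h0]
          simp [Real.zero_rpow (sub_ne_zero.2 hp2)]
        · rcases Ne.lt_or_gt h0 with hneg | hpos
          · have hev : (fun y => |u y|) =ᶠ[nhds x] (fun y => -u y) := by
              have hmem : {y | u y < 0} ∈ nhds x :=
                (isOpen_lt hu.continuous continuous_const).mem_nhds hneg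
              exact Filter.eventually_of_mem hmem (fun y hy => abs_of_neg hy)
            rw [hev.fderiv_eq, fderiv_fun_neg, norm_neg]
          · have hev : (fun y => |u y|) =ᶠ[nhds x] u := by
              have hmem : {y | 0 < u y} ∈ nhds x :=
                (isOpen_lt continuous_const hu.continuous).mem_nhds hpos
              exact Filter.eventually_of_mem hmem (fun y hy => abs_of_pos hy)
            rw [hev.fderiv_eq]
      have hI : 0 ≤ ∫ x, |u x| ^ (p-2) * ‖fderiv ℝ u x‖ ^ 2 := by
        apply integral_nonneg
        intro x
        positivity
      simp only [heq]
      nlinarith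
  · -- second conjunct
    set q : ℝ := (p-2)/2 with hq
    set L : EuclideanSpace ℝ (Fin n) → ℝ := lapR u with hL
    have hLc : Continuous L := by
      apply continuous_finset_sum
      intro i _
      exact ((((hu.fderiv_right (m := (⊤ : ℕ∞)) (by simp)).clm_apply
        contDiff_const).fderiv_right (m := (⊤ : ℕ∞)) (by simp)).clm_apply contDiff_const).continuous
    set G : ℝ → ℝ := fun t => |t| * (t^2+1)^q + |t| ^ (p-1) with hG
    have hG0 : G 0 = 0 := by
      simp [hG, Real.zero_rpow (by linarith : p - 1 ≠ 0)]
    have hGc : Continuous G := by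
      apply Continuous.add
      · exact continuous_abs.mul (((continuous_pow 2).add continuous_const).rpow_const
          (fun t => Or.inl (by positivity : t^2 + 1 ≠ 0)))
      · exact continuous_abs.rpow_const (fun t => Or.inr (by linarith))
    set bound : EuclideanSpace ℝ (Fin n) → ℝ := fun x => G (u x) * |L x| with hbd
    have hbound_int : Integrable bound := by
      apply Continuous.integrable_of_hasCompactSupport
      · exact (hGc.comp hu.continuous).mul hLc.abs
      · exact (hc.comp_left (g := G) hG0).mul_right
    set F : ℕ → EuclideanSpace ℝ (Fin n) → ℝ :=
      fun k x => (u x * ((u x)^2 + 1/((k:ℝ)+1)) ^ q) * L x with hF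
    have hεpos : ∀ k : ℕ, (0:ℝ) < 1/((k:ℝ)+1) := fun k => by positivity
    have hFle : ∀ k, (∫ x, F k x) ≤ 0 := fun k => aux_ibp p hp u hu hc (hεpos k)
    have hsq : ∀ t : ℝ, t ≠ 0 → (t^2 : ℝ) ^ q = |t| ^ (p-2) := by
      intro t ht
      have h2q : ((2:ℕ):ℝ) * q = p - 2 := by push_cast; rw [hq]; ring
      rw [← sq_abs t, ← Real.rpow_natCast |t| 2, ← Real.rpow_mul (abs_nonneg t), h2q]
    have hGbound : ∀ (k : ℕ) (t : ℝ), |t * (t^2 + 1/((k:ℝ)+1)) ^ q| ≤ G t := by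
      intro k t
      have hε1 : (1:ℝ)/((k:ℝ)+1) ≤ 1 := by
        rw [div_le_one (by positivity)]
        linarith [Nat.cast_nonneg (α := ℝ) k]
      have hbp : (0:ℝ) < t^2 + 1/((k:ℝ)+1) := by positivity
      rw [abs_mul, abs_of_nonneg (Real.rpow_nonneg hbp.le q)]
      rcases le_or_gt 0 q with hq0 | hq0
      · have h1 : (t^2 + 1/((k:ℝ)+1)) ^ q ≤ (t^2+1) ^ q :=
          Real.rpow_le_rpow hbp.le (by linarith) hq0
        have h2 : |t| * (t^2 + 1/((k:ℝ)+1)) ^ q ≤ |t| * (t^2+1) ^ q :=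
          mul_le_mul_of_nonneg_left h1 (abs_nonneg t)
        have h3 : (0:ℝ) ≤ |t| ^ (p-1) := Real.rpow_nonneg (abs_nonneg t) _
        rw [hG]; dsimp only; linarith
      · by_cases ht : t = 0
        · subst ht
          simp [hG0]
        · have htpos : (0:ℝ) < t^2 := by positivity
          have h1 : (t^2 + 1/((k:ℝ)+1)) ^ q ≤ (t^2) ^ q :=
            Real.rpow_le_rpow_of_nonpos (x := t^2) htpos (by linarith [hεpos k]) hq0.le
          have h2 : |t| * (t^2 + 1/((k:ℝ)+1)) ^ q ≤ |t| * (t^2) ^ q :=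
            mul_le_mul_of_nonneg_left h1 (abs_nonneg t)
          have h3 : |t| * (t^2) ^ q = |t| ^ (p-1) := by
            rw [hsq t ht]
            nth_rewrite 1 [← Real.rpow_one |t|]
            rw [← Real.rpow_add (abs_pos.2 ht)]
            congr 1
            ring
          have h4 : (0:ℝ) ≤ |t| * (t^2+1)^q :=
            mul_nonneg (abs_nonneg t) (Real.rpow_nonneg (by positivity) q)
          rw [hG]; dsimp only; linarith [h2.trans_eq h3]
    have hDCT : Filter.Tendsto (fun k => ∫ x, F k x) Filter.atTop
        (nhds (∫ x, |u x| ^ (p - 2) * u x * lapR u x)) := by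
      apply tendsto_integral_of_dominated_convergence bound
      · intro k
        apply Continuous.aestronglyMeasurable
        exact ((hu.continuous.mul (((hu.continuous.pow 2).add continuous_const).rpow_const
          (fun x => Or.inl (by positivity : u x ^ 2 + 1/((k:ℝ)+1) ≠ 0)))).mul hLc)
      · exact hbound_int
      · intro k
        refine Filter.Eventually.of_forall fun x => ?_
        rw [hF]; dsimp only
        rw [Real.norm_eq_abs, abs_mul, hbd]
        exact mul_le_mul_of_nonneg_right (hGbound k (u x)) (abs_nonneg (L x))
      · refine Filter.Eventually.of_forall fun x => ?_
        by_cases h0 : u x = 0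
        · have : ∀ k : ℕ, F k x = 0 := by
            intro k
            rw [hF]; dsimp only; rw [h0]; ring
          simp only [this, h0, abs_zero]
          rw [show (0:ℝ) ^ (p-2) * 0 * lapR u x = 0 by ring]
          exact tendsto_const_nhds
        · have h1 : Filter.Tendsto (fun k : ℕ => (u x)^2 + 1/((k:ℝ)+1)) Filter.atTop
              (nhds ((u x)^2)) := by
            have := tendsto_one_div_add_atTop_nhds_zero_nat (𝕜 := ℝ)
            have h2 := (tendsto_const_nhds (x := (u x)^2) (f := Filter.atTop (α := ℕ))).add this
            simpa using h2
          have hcx : ContinuousAt (fun s : ℝ => s ^ q) ((u x)^2) :=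
            Real.continuousAt_rpow_const _ _ (Or.inl (by positivity))
          have h2 := (hcx.tendsto.comp h1).const_mul (u x)
          have h3 := h2.mul_const (L x)
          rw [hsq (u x) h0] at h3
          have h5 : u x * |u x| ^ (p-2) * L x = |u x| ^ (p-2) * u x * lapR u x := by
            rw [hL]; ring
          rw [h5] at h3
          exact h3.congr (fun k => by simp only [hF, Function.comp])
    have := le_of_tendsto hDCT (Filter.Eventually.of_forall hFle)
    exact this
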